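/- arXiv:1006.5522 — 2 statements merged into one kernel-verified Lean document; each statement's English description precedes it below -/
import Mathlib

section
/- Let f ∈ L^p_loc(ℝ) with 1 ≤ p < ∞ and define g(τ) = τ^{-p} ∫_{-1/2}^{1/2 - τ} |f(t+τ) - f(t)|^p dt for τ ∈ (0,1). Then g(2σ) ≤ g(σ) for all 0 < σ < 1/2. -/
open MeasureTheory Set

/-!
Write the increment of `f` over a step `2σ` as the sum of two increments over steps `σ`.
The convexity bound `|a + b|^p ≤ 2^(p-1) (|a|^p + |b|^p)` then bounds the `p`-th power integral
at step `2σ` over `[a, b]` by `2^(p-1)` times two integrals at step `σ`, over `[a, b]` and over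
`[a + σ, b + σ]`; both are dominated by the integral at step `σ` over `[a, b + σ]`. The
resulting factor `2^p` is exactly absorbed by the normalization `τ^(-p)`.
-/

lemma Real.rpow_add_le_mul_rpow_add_rpow {p a b : ℝ} (ha : 0 ≤ a) (hb : 0 ≤ b) (hp : 1 ≤ p) :
    (a + b) ^ p ≤ 2 ^ (p - 1) * (a ^ p + b ^ p) := by
  lift a to NNReal using ha
  lift b to NNReal using hb
  exact_mod_cast NNReal.rpow_add_le_mul_rpow_add_rpow a b hp

lemma abs_add_rpow_le {p : ℝ} (hp : 1 ≤ p) (a b : ℝ) :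
    |a + b| ^ p ≤ 2 ^ (p - 1) * (|a| ^ p + |b| ^ p) :=
  (Real.rpow_le_rpow (abs_nonneg _) (abs_add_le a b) (by linarith)).trans
    (Real.rpow_add_le_mul_rpow_add_rpow (abs_nonneg a) (abs_nonneg b) hp)

lemma Icc_eq_preimage_add_const {α : Type*} [AddCommGroup α] [PartialOrder α]
    [IsOrderedAddMonoid α] (a b c : α) :
    Icc a b = (fun t => t + c) ⁻¹' Icc (a + c) (b + c) := by
  rw [preimage_add_const_Icc, add_sub_cancel_right, add_sub_cancel_right]

lemma integrableOn_Icc_comp_add_right {E : Type*} [NormedAddCommGroup E] {G : ℝ → E} {a b : ℝ}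
    (c : ℝ) (hG : IntegrableOn G (Icc (a + c) (b + c))) :
    IntegrableOn (fun t => G (t + c)) (Icc a b) := by
  rw [Icc_eq_preimage_add_const a b c]
  exact ((measurePreserving_add_right volume c).integrableOn_comp_preimage
    (measurableEmbedding_addRight c)).2 hG

lemma setIntegral_Icc_comp_add_right {E : Type*} [NormedAddCommGroup E] [NormedSpace ℝ E]
    (G : ℝ → E) (a b c : ℝ) :
    ∫ t in Icc a b, G (t + c) = ∫ t in Icc (a + c) (b + c), G t := by
  rw [Icc_eq_preimage_add_const a b c]
  exact (measurePreserving_add_right volume c).setIntegral_preimage_emb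
    (measurableEmbedding_addRight c) G _

section Increments

variable {p : ℝ} {f : ℝ → ℝ}

lemma integrableOn_abs_sub_rpow (hp : 1 ≤ p) (hfm : Measurable f)
    (hf : ∀ a b, IntegrableOn (fun t => |f t| ^ p) (Icc a b)) (τ a b : ℝ) :
    IntegrableOn (fun t => |f (t + τ) - f t| ^ p) (Icc a b) := by
  have hmeas : Measurable fun t => |f (t + τ) - f t| ^ p :=
    (((hfm.comp (measurable_add_const τ)).sub hfm).abs).pow_const p
  refine Integrable.mono'
    (((integrableOn_Icc_comp_add_right τ (hf _ _)).add (hf a b)).const_mul (2 ^ (p - 1)))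
    hmeas.aestronglyMeasurable (ae_of_all _ fun t => ?_)
  rw [Real.norm_eq_abs, abs_of_nonneg (by positivity)]
  simpa only [Pi.add_apply, sub_eq_add_neg, abs_neg] using abs_add_rpow_le hp (f (t + τ)) (-f t)

theorem setIntegral_abs_sub_rpow_two_mul_le (hp : 1 ≤ p) (hfm : Measurable f)
    (hf : ∀ a b, IntegrableOn (fun t => |f t| ^ p) (Icc a b)) {σ : ℝ} (hσ : 0 ≤ σ) (a b : ℝ) :
    ∫ t in Icc a b, |f (t + 2 * σ) - f t| ^ p ≤
      2 ^ p * ∫ t in Icc a (b + σ), |f (t + σ) - f t| ^ p := by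
  set F : ℝ → ℝ := fun t => |f (t + σ) - f t| ^ p
  have hF : ∀ a b, IntegrableOn F (Icc a b) := integrableOn_abs_sub_rpow hp hfm hf σ
  have hF_nonneg : 0 ≤ F := fun t => by positivity
  have hF_mono : ∀ {s}, s ⊆ Icc a (b + σ) → ∫ t in s, F t ≤ ∫ t in Icc a (b + σ), F t :=
    fun hs => setIntegral_mono_set (hF _ _) (ae_of_all _ hF_nonneg) hs.eventuallyLE
  have hsplit : ∀ t, |f (t + 2 * σ) - f t| ^ p ≤ 2 ^ (p - 1) * (F (t + σ) + F t) := fun t =>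
    calc |f (t + 2 * σ) - f t| ^ p
        = |(f (t + σ + σ) - f (t + σ)) + (f (t + σ) - f t)| ^ p := by
          rw [sub_add_sub_cancel, add_assoc, ← two_mul]
      _ ≤ 2 ^ (p - 1) * (F (t + σ) + F t) := abs_add_rpow_le hp _ _
  calc ∫ t in Icc a b, |f (t + 2 * σ) - f t| ^ p
      ≤ ∫ t in Icc a b, 2 ^ (p - 1) * (F (t + σ) + F t) :=
        setIntegral_mono_on (integrableOn_abs_sub_rpow hp hfm hf _ _ _)
          (((integrableOn_Icc_comp_add_right σ (hF _ _)).add (hF _ _)).const_mul _)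
          measurableSet_Icc fun t _ => hsplit t
    _ = 2 ^ (p - 1) * ((∫ t in Icc (a + σ) (b + σ), F t) + ∫ t in Icc a b, F t) := by
        rw [integral_const_mul, integral_add (integrableOn_Icc_comp_add_right σ (hF _ _)) (hF _ _),
          setIntegral_Icc_comp_add_right]
    _ ≤ 2 ^ (p - 1) * ((∫ t in Icc a (b + σ), F t) + ∫ t in Icc a (b + σ), F t) := by
        gcongr 2 ^ (p - 1) * (?_ + ?_)
        · exact hF_mono (Icc_subset_Icc (by linarith) le_rfl)
        · exact hF_mono (Icc_subset_Icc le_rfl (by linarith))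
    _ = 2 ^ p * ∫ t in Icc a (b + σ), F t := by
        rw [← two_mul, ← mul_assoc, ← Real.rpow_add_one two_ne_zero, sub_add_cancel]

end Increments

theorem stmt0_general (p : ℝ) (hp : 1 ≤ p) (f : ℝ → ℝ) (hfm : Measurable f)
    (hf : ∀ K : Set ℝ, IsCompact K → IntegrableOn (fun t => |f t| ^ p) K)
    (g : ℝ → ℝ)
    (hg : ∀ τ : ℝ, g τ =
      τ ^ (-p) * ∫ t in Icc (-(1:ℝ)/2) (1/2 - τ), |f (t + τ) - f t| ^ p)
    (σ : ℝ) (hσ0 : 0 < σ) :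
    g (2 * σ) ≤ g σ := by
  have hdouble := setIntegral_abs_sub_rpow_two_mul_le hp hfm (fun a b => hf _ isCompact_Icc)
    hσ0.le (-(1:ℝ)/2) (1/2 - 2 * σ)
  rw [show 1/2 - 2 * σ + σ = 1/2 - σ by ring] at hdouble
  have hscale : (2 * σ) ^ (-p) * 2 ^ p = σ ^ (-p) := by
    rw [Real.mul_rpow zero_le_two hσ0.le, Real.rpow_neg zero_le_two]
    field_simp
  rw [hg, hg, ← hscale, mul_assoc]
  gcongr

theorem stmt0 (p : ℝ) (hp : 1 ≤ p) (f : ℝ → ℝ) (hfm : Measurable f)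
    (hf : ∀ K : Set ℝ, IsCompact K → IntegrableOn (fun t => |f t| ^ p) K)
    (g : ℝ → ℝ)
    (hg : ∀ τ : ℝ, g τ =
      τ ^ (-p) * ∫ t in Icc (-(1:ℝ)/2) (1/2 - τ), |f (t + τ) - f t| ^ p)
    (σ : ℝ) (hσ0 : 0 < σ) (hσ : σ < 1/2) :
    g (2 * σ) ≤ g σ :=
  stmt0_general p hp f hfm hf g hg σ hσ0
end

section
/- Let g : (0,1) → [0,∞) be measurable with g(τ) ≤ g(τ/2) for all τ ∈ (0,1), and let φ : (0,1) → [0,∞) be nonincreasing. Then ∫_0^1 g(τ)φ(τ) dτ ≥ (1/2) (∫_0^1 g(τ) dτ)(∫_0^1 φ(τ) dτ). -/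
open MeasureTheory Set
open scoped ENNReal

/-!
Write `I a = ∫₀^a g`. Substituting `τ = 2u` in the halving inequality gives `I a ≤ 2 I (a/2)` for
`a ≤ 1`, hence `I (2⁻ᵏ) ≥ 2⁻ᵏ I 1`, and by monotonicity of `I` this yields `I a ≥ (a/2) I 1` on
`(0, 1]`. As `φ` is nonincreasing, each superlevel set `{φ > t}` is an interval of some length `b`
starting at `0`, so it carries `g`-mass at least `(b/2) I 1 = ½ I 1 |{φ > t}|`; integrating over
`t` (layer cake) gives the inequality.
-/

theorem setLIntegral_Ioo_zero_comp_div_two (f : ℝ → ℝ≥0∞) (a : ℝ) :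
    ∫⁻ τ in Ioo 0 a, f (τ / 2) = 2 * ∫⁻ τ in Ioo 0 (a / 2), f τ := by
  have hderiv : ∀ x ∈ Ioo (0 : ℝ) a, HasDerivWithinAt (fun τ : ℝ => τ / 2) 2⁻¹ (Ioo 0 a) x :=
    fun x _ => ((hasDerivAt_id x).div_const 2).hasDerivWithinAt.congr_deriv (one_div 2)
  have hcov := lintegral_image_eq_lintegral_abs_deriv_mul measurableSet_Ioo hderiv
    (fun x _ y _ h => by simpa using h) f
  have himage : (fun τ : ℝ => τ / 2) '' Ioo 0 a = Ioo 0 (a / 2) := by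
    simpa only [div_eq_mul_inv, zero_mul] using image_mul_right_Ioo 0 a (inv_pos.2 two_pos)
  rw [himage, lintegral_const_mul' _ _ ENNReal.ofReal_ne_top] at hcov
  rw [hcov, ← mul_assoc, abs_of_pos (by norm_num), ENNReal.ofReal_inv_of_pos two_pos,
    ENNReal.ofReal_ofNat, ENNReal.mul_inv_cancel two_ne_zero ENNReal.ofNat_ne_top, one_mul]

section HalvingMonotone

variable {f : ℝ → ℝ≥0∞}

theorem setLIntegral_Ioo_zero_le_two_mul_half (hf : ∀ τ ∈ Ioo (0 : ℝ) 1, f τ ≤ f (τ / 2))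
    {a : ℝ} (ha : a ≤ 1) :
    ∫⁻ τ in Ioo 0 a, f τ ≤ 2 * ∫⁻ τ in Ioo 0 (a / 2), f τ := by
  rw [← setLIntegral_Ioo_zero_comp_div_two]
  exact setLIntegral_mono' measurableSet_Ioo fun τ hτ => hf τ ⟨hτ.1, hτ.2.trans_le ha⟩

theorem setLIntegral_Ioo_zero_one_le_two_pow_mul (hf : ∀ τ ∈ Ioo (0 : ℝ) 1, f τ ≤ f (τ / 2))
    (k : ℕ) :
    ∫⁻ τ in Ioo 0 1, f τ ≤ 2 ^ k * ∫⁻ τ in Ioo 0 ((2⁻¹ : ℝ) ^ k), f τ := by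
  induction k with
  | zero => simp
  | succ k ih =>
    calc ∫⁻ τ in Ioo 0 1, f τ ≤ 2 ^ k * ∫⁻ τ in Ioo 0 ((2⁻¹ : ℝ) ^ k), f τ := ih
      _ ≤ 2 ^ k * (2 * ∫⁻ τ in Ioo 0 ((2⁻¹ : ℝ) ^ k / 2), f τ) := by
        gcongr
        exact setLIntegral_Ioo_zero_le_two_mul_half hf (pow_le_one₀ (by norm_num) (by norm_num))
      _ = 2 ^ (k + 1) * ∫⁻ τ in Ioo 0 ((2⁻¹ : ℝ) ^ (k + 1)), f τ := by
        rw [pow_succ, pow_succ, div_eq_mul_inv, mul_assoc]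

theorem ofReal_half_mul_setLIntegral_Ioo_zero_one_le (hf : ∀ τ ∈ Ioo (0 : ℝ) 1, f τ ≤ f (τ / 2))
    {a : ℝ} (ha₀ : 0 < a) (ha₁ : a ≤ 1) :
    ENNReal.ofReal (a / 2) * ∫⁻ τ in Ioo 0 1, f τ ≤ ∫⁻ τ in Ioo 0 a, f τ := by
  obtain ⟨k, hk_lt, hk_le⟩ := exists_nat_pow_near_of_lt_one ha₀ ha₁ (by norm_num : (0 : ℝ) < 2⁻¹)
    (by norm_num)
  have hcoef : ENNReal.ofReal (a / 2) ≤ (2 ^ (k + 1))⁻¹ := by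
    calc ENNReal.ofReal (a / 2) ≤ ENNReal.ofReal ((2⁻¹ : ℝ) ^ (k + 1)) := by
          gcongr
          rw [pow_succ]
          linarith
      _ = (2 ^ (k + 1))⁻¹ := by
          rw [ENNReal.ofReal_pow (by norm_num), ENNReal.ofReal_inv_of_pos two_pos,
            ENNReal.inv_pow]
          simp
  calc ENNReal.ofReal (a / 2) * ∫⁻ τ in Ioo 0 1, f τ
      ≤ (2 ^ (k + 1))⁻¹ * (2 ^ (k + 1) * ∫⁻ τ in Ioo 0 ((2⁻¹ : ℝ) ^ (k + 1)), f τ) :=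
        mul_le_mul' hcoef (setLIntegral_Ioo_zero_one_le_two_pow_mul hf (k + 1))
    _ = ∫⁻ τ in Ioo 0 ((2⁻¹ : ℝ) ^ (k + 1)), f τ :=
        ENNReal.inv_mul_cancel_left (by simp) (by simp)
    _ ≤ ∫⁻ τ in Ioo 0 a, f τ := lintegral_mono_set (Ioo_subset_Ioo_right hk_lt.le)

theorem AntitoneOn.exists_Ioo_subset_superlevel_subset_Ioc {φ : ℝ → ℝ}
    (hφ : AntitoneOn φ (Ioo 0 1)) {t : ℝ} (hne : (Ioo 0 1 ∩ {τ | t < φ τ}).Nonempty) :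
    ∃ b ∈ Ioc (0 : ℝ) 1,
      Ioo 0 b ⊆ Ioo 0 1 ∩ {τ | t < φ τ} ∧ Ioo 0 1 ∩ {τ | t < φ τ} ⊆ Ioc 0 b := by
  set S := Ioo 0 1 ∩ {τ | t < φ τ}
  have hbdd : BddAbove S := ⟨1, fun τ hτ => hτ.1.2.le⟩
  obtain ⟨τ₀, hτ₀⟩ := hne
  refine ⟨sSup S, ⟨hτ₀.1.1.trans_le (le_csSup hbdd hτ₀), csSup_le ⟨τ₀, hτ₀⟩ fun τ hτ => hτ.1.2.le⟩,
    fun σ hσ => ?_, fun τ hτ => ⟨hτ.1.1, le_csSup hbdd hτ⟩⟩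
  obtain ⟨τ, hτ, hστ⟩ := exists_lt_of_lt_csSup ⟨τ₀, hτ₀⟩ hσ.2
  have hσI : σ ∈ Ioo (0 : ℝ) 1 := ⟨hσ.1, hστ.trans hτ.1.2⟩
  exact ⟨hσI, hτ.2.trans_le (hφ hσI hτ.1 hστ.le)⟩

theorem half_setLIntegral_mul_restrict_superlevel_le
    (hf : ∀ τ ∈ Ioo (0 : ℝ) 1, f τ ≤ f (τ / 2)) {φ : ℝ → ℝ} (hφ : AntitoneOn φ (Ioo 0 1))
    (t : ℝ) :
    2⁻¹ * (∫⁻ τ in Ioo 0 1, f τ) * volume.restrict (Ioo 0 1) {τ | t < φ τ}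
      ≤ ∫⁻ τ in {τ | t < φ τ}, f τ ∂volume.restrict (Ioo 0 1) := by
  rw [Measure.restrict_apply' measurableSet_Ioo, Measure.restrict_restrict' measurableSet_Ioo,
    inter_comm]
  rcases (Ioo 0 1 ∩ {τ | t < φ τ}).eq_empty_or_nonempty with hempty | hne
  · simp [hempty]
  obtain ⟨b, hb, hIoo, hIoc⟩ := hφ.exists_Ioo_subset_superlevel_subset_Ioc hne
  calc 2⁻¹ * (∫⁻ τ in Ioo 0 1, f τ) * volume (Ioo 0 1 ∩ {τ | t < φ τ})
      ≤ 2⁻¹ * (∫⁻ τ in Ioo 0 1, f τ) * ENNReal.ofReal b := by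
        gcongr
        simpa using measure_mono (μ := volume) hIoc
    _ = ENNReal.ofReal (b / 2) * ∫⁻ τ in Ioo 0 1, f τ := by
        rw [ENNReal.ofReal_div_of_pos two_pos, ENNReal.ofReal_ofNat, ENNReal.div_eq_inv_mul]
        ring
    _ ≤ ∫⁻ τ in Ioo 0 b, f τ := ofReal_half_mul_setLIntegral_Ioo_zero_one_le hf hb.1 hb.2
    _ ≤ ∫⁻ τ in Ioo 0 1 ∩ {τ | t < φ τ}, f τ := lintegral_mono_set hIoo

theorem half_setLIntegral_mul_setLIntegral_le
    (hfm : AEMeasurable f (volume.restrict (Ioo 0 1)))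
    (hf : ∀ τ ∈ Ioo (0 : ℝ) 1, f τ ≤ f (τ / 2)) {φ : ℝ → ℝ}
    (hφm : AEMeasurable φ (volume.restrict (Ioo 0 1))) (hφ₀ : ∀ τ ∈ Ioo (0 : ℝ) 1, 0 ≤ φ τ)
    (hφ : AntitoneOn φ (Ioo 0 1)) :
    2⁻¹ * (∫⁻ τ in Ioo 0 1, f τ) * ∫⁻ τ in Ioo 0 1, ENNReal.ofReal (φ τ)
      ≤ ∫⁻ τ in Ioo 0 1, f τ * ENNReal.ofReal (φ τ) := by
  set μ := volume.restrict (Ioo (0 : ℝ) 1)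
  have hφ₀' : 0 ≤ᵐ[μ] φ := ae_restrict_of_forall_mem measurableSet_Ioo hφ₀
  have hac : μ.withDensity f ≪ μ := withDensity_absolutelyContinuous μ f
  calc 2⁻¹ * (∫⁻ τ in Ioo 0 1, f τ) * ∫⁻ τ, ENNReal.ofReal (φ τ) ∂μ
      = 2⁻¹ * (∫⁻ τ in Ioo 0 1, f τ) * ∫⁻ t in Ioi 0, μ {τ | t < φ τ} := by
        rw [lintegral_eq_lintegral_meas_lt μ hφ₀' hφm]
    _ ≤ ∫⁻ t in Ioi 0, 2⁻¹ * (∫⁻ τ in Ioo 0 1, f τ) * μ {τ | t < φ τ} :=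
        lintegral_const_mul_le _ _
    _ ≤ ∫⁻ t in Ioi 0, μ.withDensity f {τ | t < φ τ} := by
        gcongr with t
        exact (half_setLIntegral_mul_restrict_superlevel_le hf hφ t).trans
          (withDensity_apply_le f _)
    _ = ∫⁻ τ, ENNReal.ofReal (φ τ) ∂μ.withDensity f :=
        (lintegral_eq_lintegral_meas_lt _ (hac.ae_le hφ₀') (hφm.mono_ac hac)).symm
    _ = ∫⁻ τ, f τ * ENNReal.ofReal (φ τ) ∂μ :=
        lintegral_withDensity_eq_lintegral_mul₀ hfm hφm.ennreal_ofReal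

end HalvingMonotone

theorem stmt4_general (g φ : ℝ → ℝ)
    (hg0 : ∀ τ ∈ Ioo (0:ℝ) 1, 0 ≤ g τ)
    (hhalf : ∀ τ ∈ Ioo (0:ℝ) 1, g τ ≤ g (τ / 2))
    (hφ0 : ∀ τ ∈ Ioo (0:ℝ) 1, 0 ≤ φ τ)
    (hφmono : AntitoneOn φ (Ioo (0:ℝ) 1))
    (hgint : IntegrableOn g (Ioo (0:ℝ) 1))
    (hφint : IntegrableOn φ (Ioo (0:ℝ) 1))
    (hgφint : IntegrableOn (fun τ => g τ * φ τ) (Ioo (0:ℝ) 1)) :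
    (1/2) * (∫ τ in Ioo (0:ℝ) 1, g τ) * (∫ τ in Ioo (0:ℝ) 1, φ τ)
      ≤ ∫ τ in Ioo (0:ℝ) 1, g τ * φ τ := by
  have hgφ0 : ∀ τ ∈ Ioo (0:ℝ) 1, 0 ≤ g τ * φ τ := fun τ hτ => mul_nonneg (hg0 τ hτ) (hφ0 τ hτ)
  have key := half_setLIntegral_mul_setLIntegral_le hgint.aemeasurable.ennreal_ofReal
    (fun τ hτ => ENNReal.ofReal_le_ofReal (hhalf τ hτ)) hφint.aemeasurable hφ0 hφmono
  rw [setLIntegral_congr_fun measurableSet_Ioo fun τ hτ => (ENNReal.ofReal_mul (hg0 τ hτ)).symm,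
    ← ofReal_integral_eq_lintegral_ofReal hgint (ae_restrict_of_forall_mem measurableSet_Ioo hg0),
    ← ofReal_integral_eq_lintegral_ofReal hφint (ae_restrict_of_forall_mem measurableSet_Ioo hφ0),
    ← ofReal_integral_eq_lintegral_ofReal hgφint
      (ae_restrict_of_forall_mem measurableSet_Ioo hgφ0)] at key
  have hgI : 0 ≤ ∫ τ in Ioo (0:ℝ) 1, g τ := setIntegral_nonneg measurableSet_Ioo hg0
  rw [← ENNReal.ofReal_le_ofReal_iff (setIntegral_nonneg measurableSet_Ioo hgφ0),
    ENNReal.ofReal_mul (by positivity), ENNReal.ofReal_mul (by positivity), one_div,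
    ENNReal.ofReal_inv_of_pos two_pos, ENNReal.ofReal_ofNat]
  exact key

theorem stmt4 (g φ : ℝ → ℝ) (hgm : Measurable g)
    (hg0 : ∀ τ ∈ Ioo (0:ℝ) 1, 0 ≤ g τ)
    (hhalf : ∀ τ ∈ Ioo (0:ℝ) 1, g τ ≤ g (τ / 2))
    (hφ0 : ∀ τ ∈ Ioo (0:ℝ) 1, 0 ≤ φ τ)
    (hφmono : AntitoneOn φ (Ioo (0:ℝ) 1))
    (hgint : IntegrableOn g (Ioo (0:ℝ) 1))
    (hφint : IntegrableOn φ (Ioo (0:ℝ) 1))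
    (hgφint : IntegrableOn (fun τ => g τ * φ τ) (Ioo (0:ℝ) 1)) :
    (1/2) * (∫ τ in Ioo (0:ℝ) 1, g τ) * (∫ τ in Ioo (0:ℝ) 1, φ τ)
      ≤ ∫ τ in Ioo (0:ℝ) 1, g τ * φ τ :=
  stmt4_general g φ hg0 hhalf hφ0 hφmono hgint hφint hgφint
end
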